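/- arXiv:2003.03822 — 2 statements merged into one kernel-verified Lean document; each statement's English description precedes it below -/
import Mathlib

section
/- Let β ∈ ℝ and let M : (−∞,β] → ℝ be continuous with M(T) ≥ 0 for all T ≤ β and lim_{T→−∞} M(T) = 0. Let a > 0 and C₂, C₃, C₄, C₅ > 0 be constants such that M(T) ≤ a + C₂ M(T)² + C₃ M(T)³ + C₄ M(T)⁴ + C₅ M(T)⁵ for all T ≤ β, and suppose that Σ_{j=2}^{5} 2^j C_j a^{j−1} < 1. Then M(T) ≤ 2a for all T ≤ β. -/
open Filter

/-- Bootstrap lemma on a half line: if `M` is continuous and nonnegative on `(-∞,β]`,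
tends to `0` at `-∞`, satisfies `M ≤ a + C₂M² + C₃M³ + C₄M⁴ + C₅M⁵`, and
`Σ_{j=2}^5 2^j C_j a^{j-1} < 1`, then `M ≤ 2a` on `(-∞,β]`. -/
theorem bootstrap_Iic (β : ℝ) (M : ℝ → ℝ)
    (hcont : ContinuousOn M (Set.Iic β))
    (hnonneg : ∀ T ≤ β, 0 ≤ M T)
    (hlim : Tendsto M atBot (nhds 0))
    (a C₂ C₃ C₄ C₅ : ℝ) (ha : 0 < a)
    (hC₂ : 0 < C₂) (hC₃ : 0 < C₃) (hC₄ : 0 < C₄) (hC₅ : 0 < C₅)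
    (hineq : ∀ T ≤ β,
      M T ≤ a + C₂ * M T ^ 2 + C₃ * M T ^ 3 + C₄ * M T ^ 4 + C₅ * M T ^ 5)
    (hsmall : 2 ^ 2 * C₂ * a + 2 ^ 3 * C₃ * a ^ 2 + 2 ^ 4 * C₄ * a ^ 3
        + 2 ^ 5 * C₅ * a ^ 4 < 1) :
    ∀ T ≤ β, M T ≤ 2 * a := by
  -- First: M never equals 2a on (-∞, β].
  have hne : ∀ T ≤ β, M T ≠ 2 * a := by
    intro T hT hEq
    have h := hineq T hT
    rw [hEq] at h
    nlinarith [mul_pos ha ha, mul_pos (mul_pos ha ha) ha]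
  intro T hT
  by_contra h
  push_neg at h
  -- find a point T₁ < T with M T₁ < 2a
  have h2a : (0:ℝ) < 2 * a := by linarith
  have hev : ∀ᶠ x in atBot, M x < 2 * a :=
    hlim.eventually (Filter.Tendsto.eventually_lt_const h2a tendsto_id) |>.mono (fun x hx => hx)
  obtain ⟨T₁, hT₁⟩ := (hev.and (eventually_le_atBot T)).exists
  obtain ⟨hM₁, hT₁T⟩ := hT₁
  have hsub : Set.Icc T₁ T ⊆ Set.Iic β := fun x hx => le_trans hx.2 hT
  have hIVT := intermediate_value_Icc hT₁T (hcont.mono hsub)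
  have hmem : 2 * a ∈ Set.Icc (M T₁) (M T) := ⟨le_of_lt hM₁, le_of_lt h⟩
  obtain ⟨c, hc, hMc⟩ := hIVT hmem
  exact hne c (le_trans hc.2 hT) hMc
end

section
/- Let f₁, f₂ : ℝ → ℝ be four times continuously differentiable functions such that, for each j ∈ {1,2}, f_j^{(4)}(u) = 0 if and only if u = 0. Let φ₁, φ₂ : ℝ → ℝ be smooth (C^∞) compactly supported functions. Suppose f₁^{(3)}(φ₁(s)) = f₂^{(3)}(φ₂(s)) for all s ∈ ℝ and f₁^{(4)}(φ₁(s)) = f₂^{(4)}(φ₂(s)) for all s ∈ ℝ. Then φ₁(s) = φ₂(s) for all s ∈ ℝ. -/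
/-- If `f₁, f₂` are `C⁴` with fourth derivative vanishing only at `0`, and the smooth
compactly supported functions `φ₁, φ₂` satisfy `f₁⁽³⁾(φ₁) = f₂⁽³⁾(φ₂)` and
`f₁⁽⁴⁾(φ₁) = f₂⁽⁴⁾(φ₂)` everywhere, then `φ₁ = φ₂`. -/
theorem eq_of_third_and_fourth_deriv_comp_eq
    (f₁ f₂ : ℝ → ℝ) (hf₁ : ContDiff ℝ 4 f₁) (hf₂ : ContDiff ℝ 4 f₂)
    (hB₁ : ∀ u : ℝ, iteratedDeriv 4 f₁ u = 0 ↔ u = 0)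
    (hB₂ : ∀ u : ℝ, iteratedDeriv 4 f₂ u = 0 ↔ u = 0)
    (φ₁ φ₂ : ℝ → ℝ)
    (hφ₁ : ContDiff ℝ (⊤ : ℕ∞) φ₁) (hφ₁c : HasCompactSupport φ₁)
    (hφ₂ : ContDiff ℝ (⊤ : ℕ∞) φ₂) (hφ₂c : HasCompactSupport φ₂)
    (h3 : ∀ s : ℝ, iteratedDeriv 3 f₁ (φ₁ s) = iteratedDeriv 3 f₂ (φ₂ s))
    (h4 : ∀ s : ℝ, iteratedDeriv 4 f₁ (φ₁ s) = iteratedDeriv 4 f₂ (φ₂ s)) :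
    ∀ s : ℝ, φ₁ s = φ₂ s := by
  -- zero sets coincide
  have hzero : ∀ s : ℝ, φ₁ s = 0 ↔ φ₂ s = 0 := by
    intro s
    constructor
    · intro h
      exact (hB₂ _).1 (by rw [← h4 s, h, (hB₁ 0).2 rfl])
    · intro h
      exact (hB₁ _).1 (by rw [h4 s, h, (hB₂ 0).2 rfl])
  have hdφ₁ : Differentiable ℝ φ₁ := hφ₁.differentiable (by simp)
  have hdφ₂ : Differentiable ℝ φ₂ := hφ₂.differentiable (by simp)
  have hd3₁ : Differentiable ℝ (iteratedDeriv 3 f₁) :=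
    hf₁.differentiable_iteratedDeriv 3 (by norm_num)
  have hd3₂ : Differentiable ℝ (iteratedDeriv 3 f₂) :=
    hf₂.differentiable_iteratedDeriv 3 (by norm_num)
  have hder₁ : ∀ u : ℝ, deriv (iteratedDeriv 3 f₁) u = iteratedDeriv 4 f₁ u := by
    intro u; rw [← iteratedDeriv_succ]
  have hder₂ : ∀ u : ℝ, deriv (iteratedDeriv 3 f₂) u = iteratedDeriv 4 f₂ u := by
    intro u; rw [← iteratedDeriv_succ]
  set ψ : ℝ → ℝ := fun s => φ₁ s - φ₂ s with hψdef
  have hdψ : Differentiable ℝ ψ := hdφ₁.sub hdφ₂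
  have hderivψ : ∀ s, deriv ψ s = deriv φ₁ s - deriv φ₂ s := by
    intro s
    exact deriv_sub (hdφ₁ s) (hdφ₂ s)
  -- Case A: where φ₁ ≠ 0, derivatives agree
  have caseA : ∀ s : ℝ, φ₁ s ≠ 0 → deriv ψ s = 0 := by
    intro s hs
    have heq : (fun t => iteratedDeriv 3 f₁ (φ₁ t)) = fun t => iteratedDeriv 3 f₂ (φ₂ t) :=
      funext h3
    have hD1 : deriv (fun t => iteratedDeriv 3 f₁ (φ₁ t)) s
        = iteratedDeriv 4 f₁ (φ₁ s) * deriv φ₁ s := by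
      have := deriv_comp s (hd3₁ (φ₁ s)) (hdφ₁ s)
      simp only [Function.comp_def] at this
      rw [this, hder₁]
    have hD2 : deriv (fun t => iteratedDeriv 3 f₂ (φ₂ t)) s
        = iteratedDeriv 4 f₂ (φ₂ s) * deriv φ₂ s := by
      have := deriv_comp s (hd3₂ (φ₂ s)) (hdφ₂ s)
      simp only [Function.comp_def] at this
      rw [this, hder₂]
    have hkey : iteratedDeriv 4 f₁ (φ₁ s) * deriv φ₁ s
        = iteratedDeriv 4 f₁ (φ₁ s) * deriv φ₂ s := by
      rw [← hD1, heq, hD2, h4 s]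
    have hne : iteratedDeriv 4 f₁ (φ₁ s) ≠ 0 := fun h => hs ((hB₁ _).1 h)
    have := mul_left_cancel₀ hne hkey
    rw [hderivψ, this, sub_self]
  -- Case B: interior of the zero set
  have caseB : ∀ s : ℝ, s ∈ interior {t : ℝ | φ₁ t = 0} → deriv ψ s = 0 := by
    intro s hs
    have hnb : {t : ℝ | φ₁ t = 0} ∈ nhds s := mem_interior_iff_mem_nhds.1 hs
    have hψ0 : ψ =ᶠ[nhds s] (fun _ => (0 : ℝ)) := by
      filter_upwards [hnb] with t ht
      have h2 : φ₂ t = 0 := (hzero t).1 ht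
      simp [hψdef, ht, h2]
    rw [hψ0.deriv_eq, deriv_const]
  -- deriv ψ vanishes on a dense set, hence everywhere (it is continuous)
  have hcont : Continuous (deriv ψ) := by
    have : ContDiff ℝ (⊤ : ℕ∞) ψ := hφ₁.sub hφ₂
    exact this.continuous_deriv (by simp)
  have hall : ∀ s : ℝ, deriv ψ s = 0 := by
    intro s
    by_cases h1 : φ₁ s ≠ 0
    · exact caseA s h1
    push_neg at h1
    by_cases h2 : s ∈ interior {t : ℝ | φ₁ t = 0}
    · exact caseB s h2
    -- s is in the closure of {φ₁ ≠ 0}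
    have hcl : s ∈ closure {t : ℝ | φ₁ t ≠ 0} := by
      rw [mem_closure_iff_nhds]
      intro U hU
      by_contra hc
      push_neg at hc
      have hsub : U ⊆ {t : ℝ | φ₁ t = 0} := by
        intro t ht
        by_contra ht'
        exact Set.eq_empty_iff_forall_notMem.1 hc t ⟨ht, ht'⟩
      exact h2 (mem_interior_iff_mem_nhds.2 (Filter.mem_of_superset hU hsub))
    -- continuity: deriv ψ = 0 on closure of a set where it's 0
    have : deriv ψ s ∈ closure ({(0:ℝ)} : Set ℝ) := by
      have hmaps : Set.MapsTo (deriv ψ) {t : ℝ | φ₁ t ≠ 0} ({(0:ℝ)} : Set ℝ) := by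
        intro t ht
        exact caseA t ht
      exact map_mem_closure hcont hcl hmaps
    simpa using this
  -- ψ is constant, and vanishes outside the supports
  obtain ⟨s₀, hs₀⟩ : ∃ s₀ : ℝ, s₀ ∉ tsupport φ₁ ∪ tsupport φ₂ := by
    have hK : IsCompact (tsupport φ₁ ∪ tsupport φ₂) := hφ₁c.union hφ₂c
    have := hK.ne_univ
    rcases Set.ne_univ_iff_exists_notMem _ |>.1 this with ⟨s₀, hs₀⟩
    exact ⟨s₀, hs₀⟩
  have hψs₀ : ψ s₀ = 0 := by
    have h1 : φ₁ s₀ = 0 := image_eq_zero_of_notMem_tsupport (fun h => hs₀ (Or.inl h))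
    have h2 : φ₂ s₀ = 0 := image_eq_zero_of_notMem_tsupport (fun h => hs₀ (Or.inr h))
    simp [hψdef, h1, h2]
  intro s
  have := is_const_of_deriv_eq_zero hdψ hall s s₀
  have hzero' : ψ s = 0 := this.trans hψs₀
  have : φ₁ s - φ₂ s = 0 := hzero'
  linarith
end
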